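/- arXiv:0710.0034 — 6 statements merged into one kernel-verified Lean document; each statement's English description precedes it below -/
import Mathlib

section
/- Every residually connected pregeometry (over a finite type set) is a geometry, i.e., if the residue of every flag of co-rank at least two is connected and the residue of every flag of co-rank one is non-empty, then every maximal flag contains exactly one element of each type. -/
/-- A pregeometry over a type set `I`: a type `X` of elements with a reflexive,
symmetric incidence relation and a type function such that incident elements of
the same type are equal. -/
structure Pregeometry (I X : Type*) where
  typ : X → I
  inc : X → X → Prop
  inc_refl : ∀ x, inc x x
  inc_symm : ∀ x y, inc x y → inc y x
  eq_of_inc_typ : ∀ x y, inc x y → typ x = typ y → x = y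

namespace Pregeometry

variable {I X : Type*} (P : Pregeometry I X)

/-- A flag is a set of pairwise incident elements. -/
def IsFlag (F : Set X) : Prop := ∀ x ∈ F, ∀ y ∈ F, P.inc x y

/-- The elements of the residue of a flag `F`: elements not in `F` incident to
all of `F`. -/
def Res (F : Set X) : Set X := {z | z ∉ F ∧ ∀ f ∈ F, P.inc z f}

/-- The incidence relation restricted to the residue of `F`. -/
def resRel (F : Set X) (a b : X) : Prop := a ∈ P.Res F ∧ b ∈ P.Res F ∧ P.inc a b

/-- The residue of `F` is connected: it is non-empty and any two of its elements
are joined by a path in the incidence graph of the residue. -/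
def ResConnected (F : Set X) : Prop :=
  (P.Res F).Nonempty ∧
    ∀ a ∈ P.Res F, ∀ b ∈ P.Res F, Relation.ReflTransGen (P.resRel F) a b

end Pregeometry

/-- Every residually connected pregeometry over a finite type set is a geometry:
if the residue of every flag of co-rank at least two is connected and the residue
of every flag of co-rank one is non-empty, then the type function restricts to a
bijection from every maximal flag onto the type set. -/
theorem stmt_0 {I X : Type*} [Fintype I] (P : Pregeometry I X)
    (hconn : ∀ F : Set X, P.IsFlag F →
      (P.typ '' F).ncard + 2 ≤ Fintype.card I → P.ResConnected F)
    (hnonempty : ∀ F : Set X, P.IsFlag F →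
      (P.typ '' F).ncard + 1 = Fintype.card I → (P.Res F).Nonempty)
    (F : Set X) (hF : P.IsFlag F)
    (hmax : ∀ F' : Set X, P.IsFlag F' → F ⊆ F' → F' = F) :
    Set.BijOn P.typ F Set.univ := by
  -- First: the image cannot have fewer than card I types, else we could extend F.
  have himg : P.typ '' F = Set.univ := by
    by_contra hne
    have hfin : (P.typ '' F).Finite := Set.toFinite _
    have hlt : (P.typ '' F).ncard < Fintype.card I := by
      have hle : (P.typ '' F).ncard ≤ Fintype.card I := by
        simpa [Set.ncard_univ] using
          Set.ncard_le_ncard (Set.subset_univ (P.typ '' F)) (Set.toFinite _)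
      rcases lt_or_eq_of_le hle with h | h
      · exact h
      · exfalso
        apply hne
        apply Set.eq_of_subset_of_ncard_le (Set.subset_univ _)
        rw [Set.ncard_univ, Nat.card_eq_fintype_card, ← h]
    have hres : (P.Res F).Nonempty := by
      rcases Nat.lt_or_ge ((P.typ '' F).ncard + 1) (Fintype.card I) with h | h
      · exact (hconn F hF (by omega)).1
      · exact hnonempty F hF (by omega)
    obtain ⟨z, hz⟩ := hres
    have hzF : z ∉ F := hz.1
    have hflag : P.IsFlag (insert z F) := by
      intro x hx y hy
      rcases hx with rfl | hx <;> rcases hy with rfl | hy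
      · exact P.inc_refl _
      · exact hz.2 y hy
      · exact P.inc_symm _ _ (hz.2 x hx)
      · exact hF x hx y hy
    have := hmax (insert z F) hflag (Set.subset_insert _ _)
    exact hzF (this ▸ Set.mem_insert z F)
  refine ⟨fun x _ => Set.mem_univ _, ?_, ?_⟩
  · intro x hx y hy hxy
    exact P.eq_of_inc_typ x y (hF x hx y hy) hxy
  · rw [← himg]; exact Set.Subset.rfl
end

section
/- Let 𝒢 be a geometry of the form 𝒢 = 𝒢₁ ⊕ 𝒢₂ (the direct sum, where every element of 𝒢₁ is incident to every element of 𝒢₂), where 𝒢₁ is connected of rank at least two and 𝒢₂ is non-empty. Then 𝒢 is simply connected, i.e., the fundamental group of its flag complex is trivial. -/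
namespace Pregeometry

variable {I X : Type*} (P : Pregeometry I X)

/-- `P` is a geometry: the type function restricts to a bijection from every
maximal flag onto the type set. -/
def IsGeometry : Prop :=
  ∀ F : Set X, P.IsFlag F → (∀ F' : Set X, P.IsFlag F' → F ⊆ F' → F' = F) →
    Set.BijOn P.typ F Set.univ

end Pregeometry

/-- Edge-path homotopy in the flag complex of a geometry (equivalently, in the
clique complex of the incidence graph): the equivalence relation on paths
generated by insertion/deletion of repetitions `x,x`, returns `x,y,x`, and
triangles `x,y,z,x` with `x,y,z` pairwise incident (forming a simplex). -/
inductive Homotopic {V : Type*} (adj : V → V → Prop) : List V → List V → Prop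
  | refl (p : List V) : Homotopic adj p p
  | symm {p q : List V} : Homotopic adj p q → Homotopic adj q p
  | trans {p q r : List V} : Homotopic adj p q → Homotopic adj q r → Homotopic adj p r
  | rep (X Y : List V) (x : V) : Homotopic adj (X ++ x :: Y) (X ++ x :: x :: Y)
  | ret (X Y : List V) (x y : V) : adj x y →
      Homotopic adj (X ++ x :: Y) (X ++ x :: y :: x :: Y)
  | tri (X Y : List V) (x y z : V) : adj x y → adj y z → adj z x →
      Homotopic adj (X ++ x :: Y) (X ++ x :: y :: z :: x :: Y)

namespace Homotopic

variable {V : Type*} {adj : V → V → Prop}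

theorem cons (a : V) {p q : List V} (h : Homotopic adj p q) :
    Homotopic adj (a :: p) (a :: q) := by
  induction h with
  | refl p => exact .refl _
  | symm _ ih => exact ih.symm
  | trans _ _ ih₁ ih₂ => exact ih₁.trans ih₂
  | rep X Y x => exact rep (a :: X) Y x
  | ret X Y x y hxy => exact ret (a :: X) Y x y hxy
  | tri X Y x y z h₁ h₂ h₃ => exact tri (a :: X) Y x y z h₁ h₂ h₃

/-- The triangle `x,m,y` lets the edge `x,y` be rerouted through `m`. -/
theorem subdivide [Std.Symm adj] (X Y : List V) {x m y : V}
    (hxm : adj x m) (hmy : adj m y) (hxy : adj x y) :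
    Homotopic adj (X ++ x :: y :: Y) (X ++ x :: m :: y :: Y) := by
  have htri := tri X (y :: Y) x m y hxm hmy (symm_of adj hxy)
  have hret := ret (X ++ [x, m]) Y y x (symm_of adj hxy)
  simp only [List.append_assoc, List.cons_append, List.nil_append] at htri hret
  exact htri.trans hret.symm

theorem cone [Std.Symm adj] :
    ∀ (R X : List V) {u v w : V} (Y : List V), adj u v → adj v w → (∀ z ∈ R, adj v z) →
      List.IsChain adj (u :: (R ++ [w])) →
      Homotopic adj (X ++ u :: v :: w :: Y) (X ++ u :: (R ++ w :: Y))
  | [], X, _, _, _, Y, huv, hvw, _, h =>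
    (subdivide X Y huv hvw (List.isChain_pair.1 h)).symm
  | a :: R, X, u, v, w, Y, huv, hvw, hR, h => by
    rw [List.cons_append, List.isChain_cons_cons] at h
    have hav : adj a v := symm_of adj (hR a List.mem_cons_self)
    have hsub := subdivide X (w :: Y) h.1 hav huv
    have hcone := cone R (X ++ [u]) Y hav hvw (fun z hz => hR z (List.mem_cons_of_mem a hz)) h.2
    simp only [List.append_assoc, List.cons_append, List.nil_append] at hcone
    exact hsub.trans hcone

theorem loop_of_hub [Std.Symm adj] {x₀ hb : V} {L : List V} (h₀ : adj x₀ hb)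
    (hL : ∀ z ∈ L, adj hb z) (h : List.IsChain adj (x₀ :: (L ++ [x₀]))) :
    Homotopic adj (x₀ :: (L ++ [x₀])) [x₀] :=
  ((ret [] [] x₀ hb h₀).trans (cone L [] [] h₀ (symm_of adj h₀) hL h)).symm

section Join

variable (S : V → Prop)

theorem exists_homotopic_interior_subset [Std.Symm adj]
    (hjoin : ∀ z v, S z → ¬ S v → adj z v)
    (hpath : ∀ u w, ∃ R, (∀ z ∈ R, S z) ∧ List.IsChain adj (u :: (R ++ [w]))) (e : V) :
    ∀ (L : List V) (u : V), List.IsChain adj (u :: (L ++ [e])) →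
      ∃ L', (∀ z ∈ L', S z) ∧ List.IsChain adj (u :: (L' ++ [e])) ∧
        Homotopic adj (u :: (L ++ [e])) (u :: (L' ++ [e]))
  | [], _, h => ⟨[], by simp, h, .refl _⟩
  | v :: L, u, h => by
    rw [List.cons_append, List.isChain_cons_cons] at h
    obtain ⟨huv, hv⟩ := h
    obtain ⟨L₁, hL₁S, hL₁, H⟩ := exists_homotopic_interior_subset hjoin hpath e L v hv
    by_cases hvS : S v
    · exact ⟨v :: L₁, List.forall_mem_cons.2 ⟨hvS, hL₁S⟩,
        List.isChain_cons_cons.2 ⟨huv, hL₁⟩, H.cons u⟩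
    obtain ⟨w, Y, hwY⟩ := List.exists_cons_of_ne_nil (List.concat_ne_nil e L₁)
    rw [hwY, List.isChain_cons_cons] at hL₁
    rw [hwY] at H
    obtain ⟨R, hRS, hR⟩ := hpath u w
    refine ⟨R ++ L₁, ?_, ?_, ?_⟩
    · simpa only [List.mem_append, or_imp, forall_and] using And.intro hRS hL₁S
    · rw [List.append_assoc, hwY]
      exact List.isChain_cons_split.2 ⟨hR, hL₁.2⟩
    · rw [List.append_assoc, hwY]
      exact (H.cons u).trans <|
        cone R [] Y huv hL₁.1 (fun z hz => symm_of adj (hjoin z v (hRS z hz) hvS)) hR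

theorem loop_of_join [Std.Symm adj] [Std.Refl adj]
    (hjoin : ∀ z v, S z → ¬ S v → adj z v)
    (hpath : ∀ u w, ∃ R, (∀ z ∈ R, S z) ∧ List.IsChain adj (u :: (R ++ [w])))
    (hne : ∃ c, ¬ S c) {x₀ : V} {L : List V} (h : List.IsChain adj (x₀ :: (L ++ [x₀]))) :
    Homotopic adj (x₀ :: (L ++ [x₀])) [x₀] := by
  obtain ⟨L', hL'S, hL', H⟩ := exists_homotopic_interior_subset S hjoin hpath x₀ L x₀ h
  refine H.trans ?_
  by_cases hx₀ : S x₀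
  · obtain ⟨c, hc⟩ := hne
    exact loop_of_hub (hjoin x₀ c hx₀ hc)
      (fun z hz => symm_of adj (hjoin z c (hL'S z hz) hc)) hL'
  · exact loop_of_hub (refl_of adj x₀)
      (fun z hz => symm_of adj (hjoin z x₀ (hL'S z hz) hx₀)) hL'

end Join

end Homotopic

theorem List.exists_isChain_of_reflTransGen_restrict {V : Type*} {adj : V → V → Prop}
    {S : V → Prop} [Std.Refl adj] {u w : V}
    (h : Relation.ReflTransGen (fun a b => adj a b ∧ S a ∧ S b) u w) :
    ∃ R, (∀ z ∈ R, S z) ∧ List.IsChain adj (u :: (R ++ [w])) := by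
  induction h with
  | refl => exact ⟨[], by simp, List.isChain_pair.2 (refl_of adj u)⟩
  | @tail b c _ hbc ih =>
    obtain ⟨R, hRS, hR⟩ := ih
    refine ⟨R ++ [b], ?_, ?_⟩
    · simpa only [List.mem_append, List.mem_singleton, or_imp, forall_and, forall_eq]
        using And.intro hRS hbc.2.1
    · rw [List.append_assoc, List.singleton_append]
      exact List.isChain_cons_split.2 ⟨hR, List.isChain_pair.2 hbc.1⟩

namespace Pregeometry

variable {I X : Type*} (P : Pregeometry I X)

instance : Std.Symm P.inc := ⟨P.inc_symm⟩

instance : Std.Refl P.inc := ⟨P.inc_refl⟩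

theorem exists_path_of_join (J : Set I)
    (hcross : ∀ x y : X, P.typ x ∈ J → P.typ y ∉ J → P.inc x y) {m : X} (hm : P.typ m ∈ J)
    (hconn : ∀ x y : X, P.typ x ∈ J → P.typ y ∈ J →
      Relation.ReflTransGen (fun a b => P.inc a b ∧ P.typ a ∈ J ∧ P.typ b ∈ J) x y)
    (u w : X) :
    ∃ R, (∀ z ∈ R, P.typ z ∈ J) ∧ List.IsChain P.inc (u :: (R ++ [w])) := by
  by_cases hu : P.typ u ∈ J <;> by_cases hw : P.typ w ∈ J
  · exact List.exists_isChain_of_reflTransGen_restrict (hconn u w hu hw)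
  · exact ⟨[], by simp, List.isChain_pair.2 (hcross u w hu hw)⟩
  · exact ⟨[], by simp, List.isChain_pair.2 (symm_of P.inc (hcross w u hw hu))⟩
  · exact ⟨[m], by simpa using hm, List.isChain_cons_cons.2
      ⟨symm_of P.inc (hcross m u hm hu), List.isChain_pair.2 (hcross m w hm hw)⟩⟩

end Pregeometry

theorem stmt_3_general {I X : Type*} (P : Pregeometry I X)
    (J : Set I)
    (hcross : ∀ x y : X, P.typ x ∈ J → P.typ y ∉ J → P.inc x y)
    (hconn₁ : (∃ x : X, P.typ x ∈ J) ∧ ∀ x y : X, P.typ x ∈ J → P.typ y ∈ J →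
      Relation.ReflTransGen (fun a b => P.inc a b ∧ P.typ a ∈ J ∧ P.typ b ∈ J) x y)
    (hne₂ : ∃ y : X, P.typ y ∉ J) :
    (∀ x y : X, Relation.ReflTransGen P.inc x y) ∧
    (∀ (x₀ : X) (p : List X), p.Chain' P.inc → p.head? = some x₀ →
      p.getLast? = some x₀ → Homotopic P.inc p [x₀]) := by
  obtain ⟨⟨m, hm⟩, hconn⟩ := hconn₁
  have hpath := P.exists_path_of_join J hcross hm hconn
  refine ⟨fun x y => ?_, fun x₀ p hp hhead hlast => ?_⟩
  · obtain ⟨R, -, hR⟩ := hpath x y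
    exact List.relationReflTransGen_of_exists_isChain_cons _ hR (by simp)
  rcases p with _ | ⟨a, q⟩
  · simp at hhead
  obtain rfl : x₀ = a := by simpa using hhead.symm
  rcases q.eq_nil_or_concat' with rfl | ⟨L, b, rfl⟩
  · exact .refl _
  obtain rfl : b = x₀ := by simpa [List.getLast?_cons] using hlast
  exact Homotopic.loop_of_join (fun x => P.typ x ∈ J) hcross hpath hne₂ hp

/-- Let `𝒢` be a geometry of the form `𝒢₁ ⊕ 𝒢₂` (elements whose type lies in `J`
versus the rest, any element of the one part incident to any element of the other),
where `𝒢₁` is connected of rank at least two and `𝒢₂` is non-empty.  Then `𝒢` is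
simply connected: it is connected, and every cycle of its flag complex based at a
point is null-homotopic. -/
theorem stmt_3 {I X : Type*} (P : Pregeometry I X) (hgeo : P.IsGeometry)
    (J : Set I)
    (hcross : ∀ x y : X, P.typ x ∈ J → P.typ y ∉ J → P.inc x y)
    (hrank : ∃ a b : I, a ∈ J ∧ b ∈ J ∧ a ≠ b)
    (hconn₁ : (∃ x : X, P.typ x ∈ J) ∧ ∀ x y : X, P.typ x ∈ J → P.typ y ∈ J →
      Relation.ReflTransGen (fun a b => P.inc a b ∧ P.typ a ∈ J ∧ P.typ b ∈ J) x y)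
    (hne₂ : ∃ y : X, P.typ y ∉ J) :
    (∀ x y : X, Relation.ReflTransGen P.inc x y) ∧
    (∀ (x₀ : X) (p : List X), p.Chain' P.inc → p.head? = some x₀ →
      p.getLast? = some x₀ → Homotopic P.inc p [x₀]) :=
  stmt_3_general P J hcross hconn₁ hne₂
end

section
/- In a connected graph of diameter at most two, every cycle is homotopically equivalent (in the sense of edge-path homotopy in the 2-dimensional clique complex) to a product of cycles of length at most five. -/
/-- Concatenation of two paths sharing an endpoint (the product of cycles based
at a common point). -/
def glue {V : Type*} (p q : List V) : List V := p ++ q.tail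

/-- A conjugated cycle of length at most five based at `x₀`: a closed path of the
form `w · s · w⁻¹` where `w` is a path from `x₀` to some vertex and `s` is a
closed path there with at most five edges (at most six vertices). -/
def ConjSmall {V : Type*} (adj : V → V → Prop) (x₀ : V) (c : List V) : Prop :=
  ∃ w s : List V, w.Chain' adj ∧ s.Chain' adj ∧ w.head? = some x₀ ∧
    s.head? = w.getLast? ∧ s.getLast? = w.getLast? ∧ s.length ≤ 6 ∧
    c = w ++ s.tail ++ w.reverse.tail

/-!
Fix shortest edge paths `γ v` from `x₀` to every vertex `v`; by the diameter bound each has at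
most two edges. At every vertex `y` of the cycle `p` insert the backtrack `(γ y)⁻¹ · γ y`. This
cuts `p` into the cycles `γ x · (x, y) · (γ y)⁻¹`, one for each edge `(x, y)` of `p`, and each of
them has at most `2 + 1 + 2 = 5` edges.
-/

theorem Homotopic.append_left {V : Type*} {adj : V → V → Prop} {p q : List V}
    (h : Homotopic adj p q) (A : List V) : Homotopic adj (A ++ p) (A ++ q) := by
  induction h with
  | refl p => exact .refl _
  | symm _ ih => exact ih.symm
  | trans _ _ ih₁ ih₂ => exact ih₁.trans ih₂
  | rep X Y x => simpa using Homotopic.rep (adj := adj) (A ++ X) Y x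
  | ret X Y x y hxy => simpa using Homotopic.ret (A ++ X) Y x y hxy
  | tri X Y x y z hxy hyz hzx => simpa using Homotopic.tri (A ++ X) Y x y z hxy hyz hzx

/-- At the endpoint `y` of an edge path `a :: m`, insert the detour back to `a` and forward again. -/
theorem Homotopic.insert_backtrack {V : Type*} {G : SimpleGraph V} (X Y : List V) :
    ∀ {a : V} {m : List V} {y : V}, (a :: m).IsChain G.Adj → (a :: m).getLast? = some y →
      Homotopic G.Adj (X ++ y :: Y) (X ++ m.reverse ++ a :: m ++ Y)
  | a, [], y, _, hy => by
    obtain rfl : a = y := by simpa using hy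
    simpa using Homotopic.refl (adj := G.Adj) (X ++ a :: Y)
  | a, b :: m, y, hchain, hy => by
    rw [List.isChain_cons_cons] at hchain
    refine (insert_backtrack X Y hchain.2 (by simpa using hy)).trans ?_
    simpa using Homotopic.ret (X ++ m.reverse) (m ++ Y) b a hchain.1.symm

theorem glue_append_singleton {V : Type*} {a : V} {F : List V} (hF : F.head? = some a)
    (A : List V) : glue (A ++ [a]) F = A ++ F := by
  obtain ⟨F', rfl⟩ := List.head?_eq_some_iff.mp hF
  simp [glue]

theorem head?_foldr_glue {V : Type*} {a : V} :
    ∀ {L : List (List V)}, (∀ c ∈ L, c.head? = some a) → (L.foldr glue [a]).head? = some a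
  | [], _ => rfl
  | c :: L, hL => by
    obtain ⟨c', hc⟩ := List.head?_eq_some_iff.mp (hL c List.mem_cons_self)
    simp [glue, hc]

def IsEdgePath {V : Type*} (adj : V → V → Prop) (a b : V) (p : List V) : Prop :=
  p.IsChain adj ∧ p.head? = some a ∧ p.getLast? = some b

theorem IsEdgePath.append {V : Type*} {adj : V → V → Prop} {a b x y : V} {p q : List V}
    (hp : IsEdgePath adj a x p) (hq : IsEdgePath adj y b q) (hxy : adj x y) :
    IsEdgePath adj a b (p ++ q) := by
  obtain ⟨p', rfl⟩ := List.getLast?_eq_some_iff.mp hp.2.2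
  obtain ⟨q', rfl⟩ := List.head?_eq_some_iff.mp hq.2.1
  refine ⟨hp.1.append hq.1 (by simpa using hxy), ?_, ?_⟩
  · simpa using hp.2.1
  · simpa using hq.2.2

theorem IsEdgePath.reverse {V : Type*} {G : SimpleGraph V} {a b : V} {p : List V}
    (hp : IsEdgePath G.Adj a b p) : IsEdgePath G.Adj b a p.reverse :=
  ⟨List.isChain_reverse.mpr (hp.1.imp fun _ _ h => h.symm), by simpa using hp.2.2,
    by simpa using hp.2.1⟩

theorem conjSmall_of_isEdgePath {V : Type*} {adj : V → V → Prop} {x₀ : V} {c : List V}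
    (hc : IsEdgePath adj x₀ x₀ c) (hlen : c.length ≤ 6) : ConjSmall adj x₀ c := by
  obtain ⟨c', rfl⟩ := List.head?_eq_some_iff.mp hc.2.1
  exact ⟨[x₀], x₀ :: c', List.isChain_singleton x₀, hc.1, rfl, rfl, hc.2.2, hlen, by simp⟩

section Fan

variable {V : Type*} (γ : V → List V)

def fanCycle (x y : V) : List V := γ x ++ (γ y).reverse

def fanCycles : List V → List (List V)
  | x :: y :: t => fanCycle γ x y :: fanCycles (y :: t)
  | _ => []

theorem forall_mem_fanCycles {adj : V → V → Prop} {P : List V → Prop}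
    (hP : ∀ x y, adj x y → P (fanCycle γ x y)) :
    ∀ {p : List V}, p.IsChain adj → ∀ c ∈ fanCycles γ p, P c
  | [], _ => by simp [fanCycles]
  | [_], _ => by simp [fanCycles]
  | x :: y :: t, hp => by
    rw [List.isChain_cons_cons] at hp
    simpa [fanCycles, hP x y hp.1] using forall_mem_fanCycles hP hp.2

variable {G : SimpleGraph V} {x₀ : V}

theorem homotopic_foldr_fanCycles (hγ : ∀ v, IsEdgePath G.Adj x₀ v (γ v)) (hγ₀ : γ x₀ = [x₀]) :
    ∀ {x : V} {u : List V}, (x :: u).IsChain G.Adj → (x :: u).getLast? = some x₀ →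
      Homotopic G.Adj (γ x ++ u) ((fanCycles γ (x :: u)).foldr glue [x₀])
  | x, [], _, hx => by
    obtain rfl : x = x₀ := by simpa using hx
    simpa [fanCycles, hγ₀] using Homotopic.refl (adj := G.Adj) [x]
  | x, y :: t, hchain, hlast => by
    rw [List.isChain_cons_cons] at hchain
    set F := (fanCycles γ (y :: t)).foldr glue [x₀]
    have ih : Homotopic G.Adj (γ y ++ t) F :=
      homotopic_foldr_fanCycles hγ hγ₀ hchain.2 (by simpa using hlast)
    have hF : F.head? = some x₀ := by
      refine head?_foldr_glue (forall_mem_fanCycles γ (fun x y _ => ?_) hchain.2)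
      obtain ⟨q, hq⟩ := List.head?_eq_some_iff.mp (hγ x).2.1
      simp [fanCycle, hq]
    obtain ⟨m, hm⟩ := List.head?_eq_some_iff.mp (hγ y).2.1
    have hback := Homotopic.insert_backtrack (G := G) (γ x) t (hm ▸ (hγ y).1) (hm ▸ (hγ y).2.2)
    have hfan : glue (fanCycle γ x y) F = γ x ++ m.reverse ++ F := by
      rw [fanCycle, hm, List.reverse_cons, ← List.append_assoc, glue_append_singleton hF]
    rw [fanCycles, List.foldr_cons, hfan]
    refine hback.trans ?_
    simpa [hm] using ih.append_left (γ x ++ m.reverse)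

end Fan

theorem SimpleGraph.Connected.exists_shortest_edgePaths {V : Type*} {G : SimpleGraph V}
    (hconn : G.Connected) (x₀ : V) :
    ∃ γ : V → List V, γ x₀ = [x₀] ∧
      ∀ v, IsEdgePath G.Adj x₀ v (γ v) ∧ (γ v).length = G.dist x₀ v + 1 := by
  choose w hw using hconn.exists_walk_length_eq_dist x₀
  refine ⟨fun v => (w v).support, ?_, fun v => ⟨⟨(w v).isChain_adj_support, ?_, ?_⟩, ?_⟩⟩
  · rw [← SimpleGraph.Walk.nil_iff_support_eq, ← SimpleGraph.Walk.length_eq_zero_iff, hw,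
      SimpleGraph.dist_self]
  · dsimp only
    rw [← (w v).cons_tail_support]; rfl
  · dsimp only
    rw [List.getLast?_eq_some_getLast (w v).support_ne_nil, SimpleGraph.Walk.getLast_support]
  · rw [SimpleGraph.Walk.length_support, hw]

/-- In a connected graph of diameter at most two, every cycle is homotopically
equivalent (edge-path homotopy in the 2-dimensional clique complex) to a product
of (conjugated) cycles of length at most five. -/
theorem stmt_4 {V : Type*} (G : SimpleGraph V) (hconn : G.Connected)
    (hdiam : ∀ u v : V, G.dist u v ≤ 2) (x₀ : V)
    (p : List V) (hp : p.Chain' G.Adj)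
    (hhead : p.head? = some x₀) (hlast : p.getLast? = some x₀) :
    ∃ L : List (List V), (∀ c ∈ L, ConjSmall G.Adj x₀ c) ∧
      Homotopic G.Adj p (L.foldr glue [x₀]) := by
  obtain ⟨γ, hγ₀, hγ⟩ := hconn.exists_shortest_edgePaths x₀
  obtain ⟨u, rfl⟩ := List.head?_eq_some_iff.mp hhead
  refine ⟨fanCycles γ (x₀ :: u), forall_mem_fanCycles γ (fun x y hxy => ?_) hp, ?_⟩
  · refine conjSmall_of_isEdgePath ((hγ x).1.append (hγ y).1.reverse hxy) ?_
    have hx := (hγ x).2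
    have hy := (hγ y).2
    have := hdiam x₀ x
    have := hdiam x₀ y
    simp only [fanCycle, List.length_append, List.length_reverse]
    omega
  · simpa [hγ₀] using homotopic_foldr_fanCycles γ (fun v => (hγ v).1) hγ₀ hp hlast
end

section
/- Let (G, B, N, S) be a Tits system with Weyl group W = N/H. Then G is the union over w ∈ W of the double cosets BwB, and BwB = Bw'B implies w = w' (Bruhat decomposition). -/
/-- A Tits system (`BN`-pair): a group `G` with subgroups `B`, `N` generating `G`,
such that `H = B ⊓ N` is normal in `N` (expressed by presenting the Weyl group `W`
as a quotient of `N` with kernel `H`), `W` admits a finite generating set `S`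
making it a Coxeter group, and the axioms (iv) and (v) hold. -/
structure TitsSystem (G : Type*) [Group G] (W : Type*) [Group W] where
  B : Subgroup G
  N : Subgroup G
  /-- the quotient map `N → W = N/H` -/
  π : N →* W
  π_surj : Function.Surjective π
  ker_eq : π.ker = (B ⊓ N).subgroupOf N
  /-- the distinguished generators of `W` -/
  S : Set W
  S_finite : S.Finite
  /-- (i) `G` is generated by `B` and `N` -/
  gen : B ⊔ N = ⊤
  /-- (iii) `(W, S)` is a Coxeter system -/
  coxeter : ∃ (I : Type) (M : CoxeterMatrix I) (cs : CoxeterSystem M W),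
    Set.range cs.simple = S
  /-- (iv) `wᵢ B wᵢ⁻¹ ≠ B` for all `wᵢ ∈ S` -/
  axiom4 : ∀ s ∈ S, ∀ n : N, π n = s →
    (fun b => (n : G) * b * (n : G)⁻¹) '' (B : Set G) ≠ (B : Set G)
  /-- (v) `wᵢ B w ⊆ BwB ∪ B wᵢ w B` for all `wᵢ ∈ S`, `w ∈ W` -/
  axiom5 : ∀ s ∈ S, ∀ w : W, ∀ n m : N, π n = s → π m = w → ∀ b ∈ B,
    ∃ b₁ ∈ B, ∃ b₂ ∈ B, ∃ m' : N, (π m' = w ∨ π m' = s * w) ∧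
      (n : G) * b * (m : G) = b₁ * (m' : G) * b₂

/-- The double coset `BwB` (well defined since `H ⊆ B`). -/
def TitsSystem.DC {G W : Type*} [Group G] [Group W] (T : TitsSystem G W)
    (w : W) : Set G :=
  {g | ∃ b₁ ∈ T.B, ∃ b₂ ∈ T.B, ∃ n : T.N, T.π n = w ∧ g = b₁ * (n : G) * b₂}

namespace TitsSystem

variable {G W : Type*} [Group G] [Group W] (T : TitsSystem G W)

lemma coe_mem_B_of_pi_eq_one {n : T.N} (h : T.π n = 1) : (n : G) ∈ T.B := by
  have hn : n ∈ T.π.ker := h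
  rw [T.ker_eq, Subgroup.mem_subgroupOf] at hn
  exact hn.1

lemma pi_eq_one_of_coe_mem_B {n : T.N} (h : (n : G) ∈ T.B) : T.π n = 1 := by
  have : n ∈ T.π.ker := by
    rw [T.ker_eq, Subgroup.mem_subgroupOf]
    exact ⟨h, n.2⟩
  exact this

lemma coe_mem_DC (n : T.N) : (n : G) ∈ T.DC (T.π n) :=
  ⟨1, one_mem _, 1, one_mem _, n, rfl, by group⟩

lemma DC_subset_of_mem {g : G} {w w' : W} (h : g ∈ T.DC w) (h' : g ∈ T.DC w') :
    T.DC w ⊆ T.DC w' := by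
  obtain ⟨b₁, hb₁, b₂, hb₂, n, hn, rfl⟩ := h
  obtain ⟨c₁, hc₁, c₂, hc₂, n', hn', heq⟩ := h'
  rintro x ⟨d₁, hd₁, d₂, hd₂, m, hm, rfl⟩
  -- m and n both map to w, so k := n⁻¹ * m lies in the kernel, hence in B
  have hk : ((n⁻¹ * m : T.N) : G) ∈ T.B := by
    apply T.coe_mem_B_of_pi_eq_one
    rw [map_mul, map_inv, hn, hm, inv_mul_cancel]
  have hng : (n : G) = b₁⁻¹ * (c₁ * (n' : G) * c₂) * b₂⁻¹ := by
    rw [← heq]; group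
  refine ⟨d₁ * b₁⁻¹ * c₁, mul_mem (mul_mem hd₁ (inv_mem hb₁)) hc₁,
    c₂ * b₂⁻¹ * ((n⁻¹ * m : T.N) : G) * d₂,
    mul_mem (mul_mem (mul_mem hc₂ (inv_mem hb₂)) hk) hd₂, n', hn', ?_⟩
  have hmg : (m : G) = (n : G) * ((n⁻¹ * m : T.N) : G) := by
    push_cast; group
  rw [hmg, hng]; group

lemma DC_eq_of_mem {g : G} {w w' : W} (h : g ∈ T.DC w) (h' : g ∈ T.DC w') :
    T.DC w = T.DC w' :=
  Set.Subset.antisymm (T.DC_subset_of_mem h h') (T.DC_subset_of_mem h' h)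

/-- Key lemma: `n · b · m` lies in some double coset. -/
lemma key (v : W) : ∀ n : T.N, T.π n = v → ∀ b ∈ T.B, ∀ m : T.N,
    ∃ u : W, (n : G) * b * (m : G) ∈ T.DC u := by
  obtain ⟨I, M, cs, hS⟩ := T.coxeter
  have hv : v ∈ Submonoid.closure T.S := by
    rw [← hS, cs.submonoid_closure_range_simple]; trivial
  induction hv using Submonoid.closure_induction with
  | mem s hs =>
    intro n hn b hb m
    obtain ⟨b₁, hb₁, b₂, hb₂, m', _, heq⟩ := T.axiom5 s hs (T.π m) n m hn rfl b hb
    exact ⟨T.π m', b₁, hb₁, b₂, hb₂, m', rfl, heq⟩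
  | one =>
    intro n hn b hb m
    refine ⟨T.π m, (n : G) * b, mul_mem (T.coe_mem_B_of_pi_eq_one hn) hb,
      1, one_mem _, m, rfl, by group⟩
  | mul x y hx hy ihx ihy =>
    intro n hn b hb m
    obtain ⟨nx, hnx⟩ := T.π_surj x
    have hny : T.π (nx⁻¹ * n) = y := by
      rw [map_mul, map_inv, hnx, hn]; group
    obtain ⟨u₁, c₁, hc₁, c₂, hc₂, m₁, hm₁, heq₁⟩ := ihy (nx⁻¹ * n) hny b hb m
    obtain ⟨u₂, d₁, hd₁, d₂, hd₂, m₂, hm₂, heq₂⟩ := ihx nx hnx c₁ hc₁ m₁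
    refine ⟨u₂, d₁, hd₁, d₂ * c₂, mul_mem hd₂ hc₂, m₂, hm₂, ?_⟩
    have h1 : (n : G) * b * (m : G)
        = (nx : G) * (((nx⁻¹ * n : T.N) : G) * b * (m : G)) := by
      push_cast; group
    rw [h1, heq₁, show (c₁ : G) * (m₁ : G) * c₂ = ((nx:G))⁻¹ * ((nx:G) * c₁ * m₁) * c₂ by group]
    rw [show (nx : G) * ((nx : G)⁻¹ * ((nx:G) * c₁ * (m₁:G)) * c₂) = ((nx:G) * c₁ * m₁) * c₂ by group]
    rw [heq₂]; group

end TitsSystem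

/-- Bruhat decomposition: let `(G, B, N, S)` be a Tits system with Weyl group
`W = N/H`.  Then `G` is the union over `w ∈ W` of the double cosets `BwB`, and
`BwB = Bw'B` implies `w = w'`. -/
theorem stmt_7 {G W : Type*} [Group G] [Group W] (T : TitsSystem G W) :
    (∀ g : G, ∃ w : W, g ∈ T.DC w) ∧
    (∀ w w' : W, T.DC w = T.DC w' → w = w') := by
  constructor
  · -- surjectivity: the union of the double cosets is a subgroup containing B and N
    let K : Subgroup G :=
      { carrier := {g | ∃ w : W, g ∈ T.DC w}
        one_mem' := ⟨1, 1, one_mem _, 1, one_mem _, 1, map_one _, by simp⟩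
        mul_mem' := by
          rintro g g' ⟨w, b₁, hb₁, b₂, hb₂, n, hn, rfl⟩ ⟨w', c₁, hc₁, c₂, hc₂, n', hn', rfl⟩
          obtain ⟨u, d₁, hd₁, d₂, hd₂, m, hm, heq⟩ :=
            T.key w n hn (b₂ * c₁) (mul_mem hb₂ hc₁) n'
          refine ⟨u, b₁ * d₁, mul_mem hb₁ hd₁, d₂ * c₂, mul_mem hd₂ hc₂, m, hm, ?_⟩
          have : b₁ * (n : G) * b₂ * (c₁ * (n' : G) * c₂)
              = b₁ * ((n : G) * (b₂ * c₁) * (n' : G)) * c₂ := by group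
          rw [this, heq]; group
        inv_mem' := by
          rintro g ⟨w, b₁, hb₁, b₂, hb₂, n, hn, rfl⟩
          refine ⟨w⁻¹, b₂⁻¹, inv_mem hb₂, b₁⁻¹, inv_mem hb₁, n⁻¹, by
            rw [map_inv, hn], by push_cast; group⟩ }
    intro g
    have : g ∈ K := by
      have : (⊤ : Subgroup G) ≤ K := by
        rw [← T.gen, sup_le_iff]
        constructor
        · intro b hb
          exact ⟨1, b, hb, 1, one_mem _, 1, map_one _, by simp⟩
        · intro n hn
          exact ⟨T.π ⟨n, hn⟩, T.coe_mem_DC ⟨n, hn⟩⟩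
      exact this trivial
    exact this
  · -- injectivity
    obtain ⟨I, M, cs, hS⟩ := T.coxeter
    have main : ∀ k : ℕ, ∀ w w' : W, cs.length w = k →
        cs.length w ≤ cs.length w' → T.DC w = T.DC w' → w = w' := by
      intro k
      induction k using Nat.strong_induction_on with
      | _ k IH =>
      intro w w' hk hle hDC
      by_cases h1 : w = 1
      · subst h1
        have h1mem : (1 : G) ∈ T.DC 1 := ⟨1, one_mem _, 1, one_mem _, 1, map_one _, by simp⟩
        rw [hDC] at h1mem
        obtain ⟨b₁, hb₁, b₂, hb₂, n, hn, heq⟩ := h1mem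
        have hng : (n : G) = b₁⁻¹ * 1 * b₂⁻¹ := by rw [heq]; group
        have hnB : (n : G) ∈ T.B := by
          rw [hng]; exact mul_mem (mul_mem (inv_mem hb₁) (one_mem _)) (inv_mem hb₂)
        rw [← hn, T.pi_eq_one_of_coe_mem_B hnB]
      · obtain ⟨i, hi⟩ := cs.exists_leftDescent_of_ne_one h1
        have hi' : cs.length (cs.simple i * w) < cs.length w := hi
        set s := cs.simple i with hs_def
        have hsS : s ∈ T.S := hS ▸ ⟨i, rfl⟩
        set v := s * w with hv_def
        have hss : s * s = 1 := cs.simple_mul_simple_self i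
        have hsv : s * v = w := by rw [hv_def, ← mul_assoc, hss, one_mul]
        have hiv : cs.length v < cs.length w := hi'
        obtain ⟨ns, hns⟩ := T.π_surj s
        obtain ⟨nw, hnw⟩ := T.π_surj w
        -- nw ∈ DC w = DC w'
        have hnwmem : (nw : G) ∈ T.DC w' := by
          rw [← hDC, ← hnw]; exact T.coe_mem_DC nw
        obtain ⟨c₁, hc₁, c₂, hc₂, n', hn', heq⟩ := hnwmem
        obtain ⟨d₁, hd₁, d₂, hd₂, m₃, hm₃, heq₂⟩ :=
          T.axiom5 s hsS w' ns n' hns hn' c₁ hc₁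
        -- ns * nw lies in DC v and in DC (π m₃)
        have hmem1 : (ns : G) * (nw : G) ∈ T.DC v :=
          ⟨1, one_mem _, 1, one_mem _, ns * nw,
            by rw [map_mul, hns, hnw], by push_cast; group⟩
        have hmem2 : (ns : G) * (nw : G) ∈ T.DC (T.π m₃) := by
          refine ⟨d₁, hd₁, d₂ * c₂, mul_mem hd₂ hc₂, m₃, rfl, ?_⟩
          rw [heq, show (ns:G) * (c₁ * (n':G) * c₂) = ((ns:G) * c₁ * n') * c₂ by group,
            heq₂]
          group
        have hDCv : T.DC v = T.DC (T.π m₃) := T.DC_eq_of_mem hmem1 hmem2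
        rcases hm₃ with hA | hB
        · -- π m₃ = w' : leads to contradiction
          rw [hA] at hDCv
          have hvw' : v = w' := by
            refine IH (cs.length v) ?_ v w' rfl ?_ hDCv
            · omega
            · exact le_of_lt (lt_of_lt_of_le hiv hle)
          exfalso
          rw [← hvw'] at hle
          omega
        · -- π m₃ = s * w'
          rw [hB] at hDCv
          have hlsw' : cs.length v ≤ cs.length (s * w') := by
            rcases cs.length_simple_mul w' i with h | h <;> rw [← hs_def] at h <;> omega
          have hvsw' : v = s * w' := IH (cs.length v) (by omega) v (s * w') rfl hlsw' hDCv
          calc w = s * v := hsv.symm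
            _ = s * (s * w') := by rw [hvsw']
            _ = w' := by rw [← mul_assoc, hss, one_mul]
    intro w w' h
    rcases le_total (cs.length w) (cs.length w') with hle | hle
    · exact main _ w w' rfl hle h
    · exact (main _ w' w rfl hle h.symm).symm
end

section
/- Let V be a finite-dimensional vector space, F = (0 = V₀ ≤ V₁ ≤ … ≤ V_k = V) a flag of subspaces, and U a nonzero proper subspace. Let k_U = min{ i : U ∩ V_i ≠ 0 }. Then U ⋔ V_i for all i (i.e. U is transversal to F) if and only if ⟨U, V_{k_U}⟩ = U + V_{k_U} = V. -/
/-- Let `V` be a vector space, `F = (0 = V₀ ≤ V₁ ≤ … ≤ V_k = V)` a flag of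
subspaces and `U` a nonzero proper subspace; let `k_U` be the least index `j`
with `U ∩ V_j ≠ 0`.  Then `U` is transversal to `F` (i.e. for every `i`,
`U ∩ V_i = 0` or `U + V_i = V`) if and only if `⟨U, V_{k_U}⟩ = V`. -/
theorem stmt_11 {F V : Type*} [Field F] [AddCommGroup V] [Module F V]
    {k : ℕ} (Vf : Fin (k + 1) → Submodule F V) (hmono : Monotone Vf)
    (h0 : Vf 0 = ⊥) (hlast : Vf (Fin.last k) = ⊤)
    (U : Submodule F V) (hUbot : U ≠ ⊥) (hUtop : U ≠ ⊤)
    (j : Fin (k + 1)) (hj : U ⊓ Vf j ≠ ⊥) (hjmin : ∀ i < j, U ⊓ Vf i = ⊥) :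
    (∀ i, U ⊓ Vf i = ⊥ ∨ U ⊔ Vf i = ⊤) ↔ U ⊔ Vf j = ⊤ := by
  constructor
  · intro h
    rcases h j with h' | h'
    · exact absurd h' hj
    · exact h'
  · intro h i
    rcases lt_or_ge i j with hij | hij
    · exact Or.inl (hjmin i hij)
    · exact Or.inr (top_le_iff.mp (h ▸ sup_le_sup_left (hmono hij) U))
end

section
/- Let V be an (n+1)-dimensional vector space over F_{q²} with a nondegenerate hermitian form, n ≥ 2 and q ≥ 2. In the geometry 𝒢 whose elements are the proper nonzero nondegenerate subspaces of V (type = dimension, incidence = symmetrized containment), the group SU(V) acts flag-transitively: for any two flags of nondegenerate subspaces of the same type, there is an isometry in SU(V) mapping one to the other. -/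
open Finset Submodule Module Set

namespace Stmt19Aux

variable {F V : Type*} [Field F] [AddCommGroup V] [Module F V]

/-- Bundled hypotheses on the hermitian form. -/
structure HermData (q : ℕ) (Φ : V → V → F) : Prop where
  add₁ : ∀ u v w : V, Φ (u + v) w = Φ u w + Φ v w
  add₂ : ∀ u v w : V, Φ u (v + w) = Φ u v + Φ u w
  smul₁ : ∀ (a : F) (u v : V), Φ (a • u) v = a * Φ u v
  smul₂ : ∀ (a : F) (u v : V), Φ u (a • v) = a ^ q * Φ u v
  herm : ∀ u v : V, Φ v u = (Φ u v) ^ q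
  q0 : q ≠ 0
  sig2 : ∀ x : F, (x ^ q) ^ q = x
  normSurj : ∀ a : F, a ≠ 0 → a ^ q = a → ∃ l : F, l ^ (q + 1) = a
  existsMu : ∃ μ : F, μ ^ q ≠ μ

variable {q : ℕ} {Φ : V → V → F}

lemma HermData.zero_left (h : HermData q Φ) (y : V) : Φ 0 y = 0 := by
  have := h.smul₁ 0 0 y; simpa using this

lemma HermData.zero_right (h : HermData q Φ) (y : V) : Φ y 0 = 0 := by
  have := h.smul₂ 0 y 0
  simpa [zero_pow h.q0] using this

lemma HermData.sum_left (h : HermData q Φ) {ι : Type*} (s : Finset ι) (f : ι → V) (y : V) :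
    Φ (∑ i ∈ s, f i) y = ∑ i ∈ s, Φ (f i) y := by
  classical
  induction s using Finset.induction_on with
  | empty => simpa using h.zero_left y
  | @insert a s ha ih => rw [Finset.sum_insert ha, h.add₁, ih, Finset.sum_insert ha]

lemma HermData.sum_right (h : HermData q Φ) {ι : Type*} (s : Finset ι) (f : ι → V) (y : V) :
    Φ y (∑ i ∈ s, f i) = ∑ i ∈ s, Φ y (f i) := by
  classical
  induction s using Finset.induction_on with
  | empty => simpa using h.zero_right y
  | @insert a s ha ih => rw [Finset.sum_insert ha, h.add₂, ih, Finset.sum_insert ha]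

/-- Orthonormal family. -/
def ON (Φ : V → V → F) {m : ℕ} (v : Fin m → V) : Prop :=
  ∀ i j, Φ (v i) (v j) = if i = j then 1 else 0

lemma ON.sum_right_on (h : HermData q Φ) {m : ℕ} {v : Fin m → V} (hv : ON Φ v)
    (c : Fin m → F) (j : Fin m) : Φ (v j) (∑ i, c i • v i) = (c j) ^ q := by
  rw [h.sum_right]
  have : ∀ i, Φ (v j) (c i • v i) = if j = i then (c i) ^ q else 0 := by
    intro i; rw [h.smul₂, hv j i]
    by_cases hji : j = i <;> simp [hji]
  simp only [this]
  simp

lemma ON.sum_left_on (h : HermData q Φ) {m : ℕ} {v : Fin m → V} (hv : ON Φ v)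
    (c : Fin m → F) (j : Fin m) : Φ (∑ i, c i • v i) (v j) = c j := by
  rw [h.sum_left]
  have : ∀ i, Φ (c i • v i) (v j) = if i = j then c i else 0 := by
    intro i; rw [h.smul₁, hv i j]
    by_cases hij : i = j <;> simp [hij]
  simp only [this]
  simp

lemma ON.expand (h : HermData q Φ) {m : ℕ} {v : Fin m → V} (hv : ON Φ v)
    (c d : Fin m → F) :
    Φ (∑ i, c i • v i) (∑ j, d j • v j) = ∑ i, c i * (d i) ^ q := by
  rw [h.sum_left]
  refine Finset.sum_congr rfl fun i _ => ?_
  rw [h.smul₁, hv.sum_right_on h]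

lemma ON.li (h : HermData q Φ) {m : ℕ} {v : Fin m → V} (hv : ON Φ v) :
    LinearIndependent F v := by
  rw [Fintype.linearIndependent_iff]
  intro g hg j
  have h1 : Φ (v j) (∑ i, g i • v i) = 0 := by rw [hg]; exact h.zero_right _
  rw [hv.sum_right_on h] at h1
  exact (pow_eq_zero_iff h.q0).mp h1

/-- "Right kernel" of Φ at x, as a submodule. -/
def perpKer (h : HermData q Φ) (x : V) : Submodule F V where
  carrier := {y | Φ x y = 0}
  zero_mem' := h.zero_right x
  add_mem' := by intro a b ha hb; show Φ x (a + b) = 0; rw [h.add₂, ha, hb, add_zero]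
  smul_mem' := by intro c y hy; show Φ x (c • y) = 0; rw [h.smul₂, hy, mul_zero]

@[simp] lemma mem_perpKer (h : HermData q Φ) (x y : V) : y ∈ perpKer h x ↔ Φ x y = 0 :=
  Iff.rfl

/-- A nonzero nondegenerate subspace contains an anisotropic vector. -/
lemma exists_aniso (h : HermData q Φ) (U : Submodule F V) (hU : U ≠ ⊥)
    (hUnd : ∀ x ∈ U, (∀ y ∈ U, Φ y x = 0) → x = 0) :
    ∃ u ∈ U, Φ u u ≠ 0 := by
  by_contra hcon
  push_neg at hcon
  obtain ⟨μ, hμ⟩ := h.existsMu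
  have key : ∀ x ∈ U, ∀ y ∈ U, Φ x y = 0 := by
    intro x hx y hy
    have h1 : Φ x y + Φ y x = 0 := by
      have := hcon (x + y) (add_mem hx hy)
      rw [h.add₁, h.add₂, h.add₂, hcon x hx, hcon y hy] at this
      linear_combination this
    have h2 : μ * Φ x y + μ ^ q * Φ y x = 0 := by
      have := hcon (μ • x + y) (add_mem (smul_mem _ _ hx) hy)
      simp only [h.add₁, h.add₂, h.smul₁, h.smul₂, hcon x hx, hcon y hy] at this
      linear_combination this
    have h3 : (μ - μ ^ q) * Φ x y = 0 := by linear_combination h2 - μ ^ q * h1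
    have h4 : μ - μ ^ q ≠ 0 := fun hc => hμ (by linear_combination -hc)
    exact (mul_eq_zero.mp h3).resolve_left h4
  apply hU
  rw [Submodule.eq_bot_iff]
  intro x hx
  exact hUnd x hx (fun y hy => key y hy x hx)


section Extend

variable [FiniteDimensional F V]

/-- Core extension lemma: an orthonormal family inside a nondegenerate subspace `Y`
extends to an orthonormal spanning family of `Y`. -/
lemma extend_aux (h : HermData q Φ) (Y : Submodule F V)
    (hYnd : ∀ x ∈ Y, (∀ y ∈ Y, Φ y x = 0) → x = 0) :
    ∀ (k d : ℕ) (v : Fin d → V), d + k = finrank F Y →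
      (∀ i, v i ∈ Y) → ON Φ v →
      ∃ w : Fin (finrank F Y) → V, (∀ i, w i ∈ Y) ∧ ON Φ w ∧
        Submodule.span F (Set.range w) = Y ∧
        ∀ (j : Fin (finrank F Y)) (i : Fin d), (j : ℕ) = (i : ℕ) → w j = v i := by
  intro k
  induction k with
  | zero =>
    intro d v hdk hvY hvON
    have hd : finrank F Y = d := by omega
    refine ⟨fun j => v (Fin.cast hd j), fun i => hvY _, ?_, ?_, ?_⟩
    · intro i j
      rw [hvON]
      simp [Fin.ext_iff]
    · have hr : Set.range (fun j => v (Fin.cast hd j)) = Set.range v := by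
        exact Function.Surjective.range_comp (fun i => ⟨Fin.cast hd.symm i, rfl⟩) v
      rw [hr]
      have hle : Submodule.span F (Set.range v) ≤ Y := by
        rw [Submodule.span_le]; rintro x ⟨i, rfl⟩; exact hvY i
      refine Submodule.eq_of_le_of_finrank_le hle ?_
      rw [finrank_span_eq_card (hvON.li h)]
      simp [hd]
    · intro j i hji
      exact congrArg v (Fin.ext (by rw [Fin.coe_cast]; exact hji))
  | succ k IH =>
    intro d v hdk hvY hvON
    have hdlt : d < finrank F Y := by omega
    classical
    set U : Submodule F V := Y ⊓ ⨅ i : Fin d, perpKer h (v i) with hUdef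
    have memU : ∀ y, y ∈ U ↔ y ∈ Y ∧ ∀ i, Φ (v i) y = 0 := by
      intro y
      simp [hUdef, Submodule.mem_inf, Submodule.mem_iInf]
    -- decomposition
    have decomp : ∀ y ∈ Y, ∃ y' ∈ U, y = (∑ i, (Φ (v i) y) ^ q • v i) + y' := by
      intro y hy
      set pr := ∑ i, (Φ (v i) y) ^ q • v i with hpr
      have hprY : pr ∈ Y := Submodule.sum_mem _ fun i _ => Submodule.smul_mem _ _ (hvY i)
      have hprS : pr ∈ Submodule.span F (Set.range v) :=
        Submodule.sum_mem _ fun i _ => Submodule.smul_mem _ _ (Submodule.subset_span ⟨i, rfl⟩)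
      refine ⟨y - pr, ?_, by abel⟩
      rw [memU]
      refine ⟨Submodule.sub_mem _ hy hprY, fun j => ?_⟩
      have h1 : Φ (v j) pr = Φ (v j) y := by
        rw [hpr, hvON.sum_right_on h (fun i => (Φ (v i) y) ^ q) j, h.sig2]
      have h2 : Φ (v j) (pr + (y - pr)) = Φ (v j) pr + Φ (v j) (y - pr) := h.add₂ _ _ _
      rw [show pr + (y - pr) = y by abel, h1] at h2
      linear_combination -h2
    -- U is nondegenerate
    have hUnd : ∀ x ∈ U, (∀ y ∈ U, Φ y x = 0) → x = 0 := by
      intro x hxU hperp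
      refine hYnd x ((memU x).mp hxU).1 fun y hy => ?_
      obtain ⟨y', hy'U, hdec⟩ := decomp y hy
      rw [hdec, h.add₁, hperp y' hy'U, h.sum_left]
      have : ∀ i, Φ ((Φ (v i) y) ^ q • v i) x = 0 := by
        intro i
        rw [h.smul₁, ((memU x).mp hxU).2 i, mul_zero]
      simp [this]
    -- U is nonzero
    have hUne : U ≠ ⊥ := by
      intro hbot
      have hle : Y ≤ Submodule.span F (Set.range v) := by
        intro y hy
        obtain ⟨y', hy'U, hdec⟩ := decomp y hy
        rw [hbot, Submodule.mem_bot] at hy'U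
        rw [hdec, hy'U, add_zero]
        exact Submodule.sum_mem _ fun i _ => Submodule.smul_mem _ _ (Submodule.subset_span ⟨i, rfl⟩)
      have := Submodule.finrank_mono hle
      rw [finrank_span_eq_card (hvON.li h)] at this
      simp at this
      omega
    obtain ⟨u, huU, hua⟩ := exists_aniso h U hUne hUnd
    -- normalize
    obtain ⟨l, hl⟩ := h.normSurj (Φ u u) hua (h.herm u u).symm
    have hl0 : l ≠ 0 := by
      intro hc; rw [hc] at hl
      exact hua (by rw [← hl, zero_pow (by omega)])
    set u₀ : V := l⁻¹ • u with hu₀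
    have hu₀U : u₀ ∈ U := Submodule.smul_mem _ _ huU
    have hΦu₀ : Φ u₀ u₀ = 1 := by
      rw [hu₀, h.smul₁, h.smul₂, inv_pow, ← mul_assoc, ← mul_inv, ← pow_succ', hl]
      exact inv_mul_cancel₀ hua
    have hu₀perp : ∀ i, Φ (v i) u₀ = 0 := by
      intro i
      rw [hu₀, h.smul₂, ((memU u).mp huU).2 i, mul_zero]
    have hu₀perp' : ∀ i, Φ u₀ (v i) = 0 := by
      intro i
      rw [h.herm (v i) u₀, hu₀perp i, zero_pow h.q0]
    -- append
    set v' : Fin (d + 1) → V := Fin.snoc v u₀ with hv'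
    have hv'Y : ∀ i, v' i ∈ Y := by
      intro i
      refine Fin.lastCases ?_ ?_ i
      · simpa [hv'] using ((memU u₀).mp hu₀U).1
      · intro j; simpa [hv'] using hvY j
    have hv'ON : ON Φ v' := by
      intro i j
      refine Fin.lastCases ?_ ?_ i <;> [skip; intro i'] <;> refine Fin.lastCases ?_ ?_ j
      · simpa [hv'] using hΦu₀
      · intro j'
        simp only [hv', Fin.snoc_last, Fin.snoc_castSucc]
        rw [hu₀perp' j']
        have : Fin.last d ≠ j'.castSucc := by
          simp [Fin.ext_iff]; omega
        simp [this]
      · simp only [hv', Fin.snoc_last, Fin.snoc_castSucc]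
        rw [hu₀perp i']
        have : i'.castSucc ≠ Fin.last d := by
          simp [Fin.ext_iff]; omega
        simp [this]
      · intro j'
        simp only [hv', Fin.snoc_castSucc]
        rw [hvON i' j']
        simp [Fin.castSucc_inj]
    obtain ⟨w, hwY, hwON, hwspan, hwpre⟩ := IH (d + 1) v' (by omega) hv'Y hv'ON
    refine ⟨w, hwY, hwON, hwspan, fun j i hji => ?_⟩
    have : w j = v' i.castSucc := hwpre j i.castSucc (by simpa using hji)
    rw [this, hv', Fin.snoc_castSucc]

lemma prefix_image {m N : ℕ} (u : Fin m → V) (w : Fin N → V)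
    (hp : ∀ (j : Fin N) (i : Fin m), (j : ℕ) = (i : ℕ) → w j = u i) (hm : m ≤ N) :
    w '' {j : Fin N | (j : ℕ) < m} = Set.range u := by
  ext x
  constructor
  · rintro ⟨j, hj, rfl⟩
    exact ⟨⟨(j : ℕ), hj⟩, (hp j ⟨(j : ℕ), hj⟩ rfl).symm⟩
  · rintro ⟨i, rfl⟩
    exact ⟨⟨(i : ℕ), lt_of_lt_of_le i.2 hm⟩, i.2, hp _ i rfl⟩

/-- Extend to an orthonormal basis of `V` adapted to a flag of nondegenerate subspaces. -/
lemma flag_extend (h : HermData q Φ)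
    (hnd : ∀ x : V, (∀ y : V, Φ y x = 0) → x = 0) :
    ∀ (r : ℕ) (W : Fin r → Submodule F V), StrictMono W →
      (∀ a, ∀ x ∈ W a, (∀ y ∈ W a, Φ y x = 0) → x = 0) →
      ∀ (d : ℕ) (v : Fin d → V), (∀ i a, v i ∈ W a) → ON Φ v →
      ∃ w : Fin (finrank F V) → V, ON Φ w ∧ Submodule.span F (Set.range w) = ⊤ ∧
        (∀ (j : Fin (finrank F V)) (i : Fin d), (j : ℕ) = (i : ℕ) → w j = v i) ∧
        ∀ a, W a = Submodule.span F (w '' {j | (j : ℕ) < finrank F (W a)}) := by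
  intro r
  induction r with
  | zero =>
    intro W _ _ d v _ hvON
    have htopnd : ∀ x ∈ (⊤ : Submodule F V), (∀ y ∈ (⊤ : Submodule F V), Φ y x = 0) → x = 0 :=
      fun x _ hx => hnd x fun y => hx y trivial
    have hdle : d ≤ finrank F (⊤ : Submodule F V) := by
      rw [finrank_top]
      simpa using (hvON.li h).fintype_card_le_finrank
    obtain ⟨w₀, _, hw₀ON, hw₀span, hw₀pre⟩ :=
      extend_aux h ⊤ htopnd (finrank F (⊤ : Submodule F V) - d) d v (by omega)
        (fun i => trivial) hvON
    have e : finrank F (⊤ : Submodule F V) = finrank F V := finrank_top F V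
    refine ⟨fun j => w₀ (Fin.cast e.symm j), ?_, ?_, ?_, fun a => a.elim0⟩
    · intro i j
      rw [hw₀ON]
      simp [Fin.ext_iff]
    · have hr : Set.range (fun j : Fin (finrank F V) => w₀ (Fin.cast e.symm j)) = Set.range w₀ := by
        ext x
        constructor
        · rintro ⟨j, rfl⟩; exact ⟨_, rfl⟩
        · rintro ⟨j, rfl⟩; exact ⟨Fin.cast e j, congrArg w₀ (Fin.ext rfl)⟩
      rw [hr]; exact hw₀span
    · intro j i hji
      exact hw₀pre _ i (by rw [Fin.coe_cast]; exact hji)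
  | succ r IH =>
    intro W hmono hWnd d v hvW hvON
    have hd0 : d ≤ finrank F (W 0) := by
      have hle : Submodule.span F (Set.range v) ≤ W 0 := by
        rw [Submodule.span_le]; rintro x ⟨i, rfl⟩; exact hvW i 0
      have := Submodule.finrank_mono hle
      rw [finrank_span_eq_card (hvON.li h)] at this
      simpa using this
    obtain ⟨u, huY, huON, huspan, hupre⟩ :=
      extend_aux h (W 0) (hWnd 0) (finrank F (W 0) - d) d v (by omega)
        (fun i => hvW i 0) hvON
    obtain ⟨w, hwON, hwspan, hwpre, hwad⟩ :=
      IH (fun a => W a.succ) (fun a b hab => hmono (by simpa using hab))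
        (fun a => hWnd a.succ) (finrank F (W 0)) u
        (fun i a => (hmono (Fin.succ_pos a)).le (huY i)) huON
    refine ⟨w, hwON, hwspan, ?_, ?_⟩
    · intro j i hji
      have hiu : u ⟨(i : ℕ), lt_of_lt_of_le i.2 hd0⟩ = v i := hupre _ i rfl
      rw [← hiu]
      exact hwpre j _ (by simpa using hji)
    · intro a
      refine Fin.cases ?_ ?_ a
      · rw [prefix_image u w hwpre (Submodule.finrank_le (W 0))]
        exact huspan.symm
      · intro b
        exact hwad b

lemma span_smul_image {ι : Type*} (c : ι → F) (u : ι → V) (hc : ∀ i, c i ≠ 0) (S : Set ι) :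
    Submodule.span F ((fun i => c i • u i) '' S) = Submodule.span F (u '' S) := by
  apply le_antisymm
  · rw [Submodule.span_le]; rintro x ⟨i, hi, rfl⟩
    exact Submodule.smul_mem _ _ (Submodule.subset_span ⟨i, hi, rfl⟩)
  · rw [Submodule.span_le]; rintro x ⟨i, hi, rfl⟩
    have hx : u i = (c i)⁻¹ • (c i • u i) := by
      rw [smul_smul, inv_mul_cancel₀ (hc i), one_smul]
    rw [hx]
    exact Submodule.smul_mem _ _ (Submodule.subset_span ⟨i, hi, rfl⟩)

/-- A linear equivalence sending one orthonormal basis to another is an isometry. -/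
lemma isom (h : HermData q Φ) {m : ℕ} {v w : Fin m → V} (hvON : ON Φ v) (hwON : ON Φ w)
    (bv : Basis (Fin m) F V) (hb : ∀ i, bv i = v i)
    (g : V ≃ₗ[F] V) (hg : ∀ i, g (v i) = w i) (x y : V) :
    Φ (g x) (g y) = Φ x y := by
  have hx : x = ∑ i, bv.repr x i • v i := by
    simp_rw [← hb]; exact (bv.sum_repr x).symm
  have hy : y = ∑ i, bv.repr y i • v i := by
    simp_rw [← hb]; exact (bv.sum_repr y).symm
  have hgx : g x = ∑ i, bv.repr x i • w i := by
    conv_lhs => rw [hx]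
    simp [map_sum, map_smul, hg]
  have hgy : g y = ∑ i, bv.repr y i • w i := by
    conv_lhs => rw [hy]
    simp [map_sum, map_smul, hg]
  rw [hgx, hgy, hwON.expand h]
  conv_rhs => rw [hx, hy]
  rw [hvON.expand h]

end Extend

section FF

variable {K : Type*} [Field K] [Fintype K] {q : ℕ}

lemma ff_order (hq2 : 2 ≤ q) (hcard : Fintype.card K = q ^ 2) :
    ∃ g : Kˣ, (∀ x : Kˣ, x ∈ Subgroup.zpowers g) ∧ orderOf g = q ^ 2 - 1 := by
  classical
  obtain ⟨g, hg⟩ := IsCyclic.exists_generator (α := Kˣ)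
  refine ⟨g, hg, ?_⟩
  rw [orderOf_eq_card_of_forall_mem_zpowers hg, Nat.card_eq_fintype_card,
    Fintype.card_units, hcard]

lemma ff_pow_q_sub_one {a : K} (hq2 : 2 ≤ q) (ha : a ≠ 0) (haq : a ^ q = a) :
    a ^ (q - 1) = 1 := by
  have h1 : a ^ (q - 1) * a = 1 * a := by
    rw [one_mul, ← pow_succ, (by omega : q - 1 + 1 = q), haq]
  exact mul_right_cancel₀ ha h1

lemma ff_norm_surj (hq2 : 2 ≤ q) (hcard : Fintype.card K = q ^ 2) :
    ∀ a : K, a ≠ 0 → a ^ q = a → ∃ l : K, l ^ (q + 1) = a := by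
  classical
  obtain ⟨g, hg, horder⟩ := ff_order hq2 hcard
  intro a ha haq
  set u : Kˣ := Units.mk0 a ha with hu
  obtain ⟨m, hm⟩ : ∃ m : ℕ, g ^ m = u := mem_powers_iff_mem_zpowers.2 (hg u)
  have hu1 : u ^ (q - 1) = 1 := by
    ext
    push_cast
    exact ff_pow_q_sub_one hq2 ha haq
  have hdvd : q ^ 2 - 1 ∣ m * (q - 1) := by
    rw [← horder]
    exact orderOf_dvd_of_pow_eq_one (by rw [pow_mul, hm, hu1])
  have hfact : (q + 1) * (q - 1) = q ^ 2 - 1 := by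
    obtain ⟨t, rfl⟩ : ∃ t, q = t + 2 := ⟨q - 2, by omega⟩
    have : (t + 2 + 1) * (t + 2 - 1) = (t + 3) * (t + 1) := by norm_num
    rw [this]
    have h2 : (t + 2) ^ 2 = t * t + 4 * t + 4 := by ring
    rw [h2]
    have h3 : (t + 3) * (t + 1) = t * t + 4 * t + 3 := by ring
    omega
  rw [← hfact] at hdvd
  obtain ⟨t, rfl⟩ := (Nat.mul_dvd_mul_iff_right (show 0 < q - 1 by omega)).mp hdvd
  refine ⟨((g ^ t : Kˣ) : K), ?_⟩
  have h4 : (g ^ t) ^ (q + 1) = u := by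
    rw [← pow_mul, mul_comm t (q + 1), hm]
  calc ((g ^ t : Kˣ) : K) ^ (q + 1) = (((g ^ t) ^ (q + 1) : Kˣ) : K) := by push_cast; ring
    _ = a := by rw [h4, hu, Units.val_mk0]
  
lemma ff_exists_mu (hq2 : 2 ≤ q) (hcard : Fintype.card K = q ^ 2) :
    ∃ μ : K, μ ^ q ≠ μ := by
  classical
  by_contra hc
  push_neg at hc
  obtain ⟨g, hg, horder⟩ := ff_order hq2 hcard
  have hg1 : g ^ (q - 1) = 1 := by
    ext
    push_cast
    exact ff_pow_q_sub_one hq2 g.ne_zero (hc g)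
  have hdvd := orderOf_dvd_of_pow_eq_one hg1
  rw [horder] at hdvd
  have hle := Nat.le_of_dvd (by omega) hdvd
  have hqq : 2 * q ≤ q * q := Nat.mul_le_mul_right q hq2
  have hsq : q ^ 2 = q * q := sq q
  omega

end FF

end Stmt19Aux

open Stmt19Aux

/-- Let `V` be an `(n+1)`-dimensional vector space over `F_{q²}` (`n ≥ 2`,
`q ≥ 2`) with a nondegenerate hermitian form `Φ` with respect to the involution
`x ↦ x^q`.  In the geometry whose elements are the proper nonzero nondegenerate
subspaces of `V` (type = dimension, incidence = symmetrized containment), the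
special unitary group acts flag-transitively: for any two flags of nondegenerate
subspaces with the same dimensions there is a determinant-one isometry of `Φ`
mapping one onto the other. -/
theorem stmt_19 {F V : Type*} [Field F] [Fintype F] [AddCommGroup V] [Module F V]
    {q n : ℕ} (hq : ∃ p k : ℕ, p.Prime ∧ 0 < k ∧ q = p ^ k) (hq2 : 2 ≤ q)
    (hcard : Fintype.card F = q ^ 2)
    [FiniteDimensional F V] (hdim : Module.finrank F V = n + 1) (hn : 2 ≤ n)
    (Φ : V → V → F)
    (hadd₁ : ∀ u v w : V, Φ (u + v) w = Φ u w + Φ v w)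
    (hadd₂ : ∀ u v w : V, Φ u (v + w) = Φ u v + Φ u w)
    (hsmul₁ : ∀ (a : F) (u v : V), Φ (a • u) v = a * Φ u v)
    (hsmul₂ : ∀ (a : F) (u v : V), Φ u (a • v) = a ^ q * Φ u v)
    (hherm : ∀ u v : V, Φ v u = (Φ u v) ^ q)
    (hnd : ∀ v : V, (∀ w : V, Φ v w = 0) → v = 0)
    {r : ℕ} (W W' : Fin r → Submodule F V)
    (hWmono : StrictMono W) (hW'mono : StrictMono W')
    (hWnd : ∀ a, ∀ x ∈ W a, (∀ y ∈ W a, Φ y x = 0) → x = 0)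
    (hW'nd : ∀ a, ∀ x ∈ W' a, (∀ y ∈ W' a, Φ y x = 0) → x = 0)
    (hWbot : ∀ a, W a ≠ ⊥) (hWtop : ∀ a, W a ≠ ⊤)
    (hW'bot : ∀ a, W' a ≠ ⊥) (hW'top : ∀ a, W' a ≠ ⊤)
    (hdims : ∀ a, Module.finrank F ↥(W a) = Module.finrank F ↥(W' a)) :
    ∃ g : V ≃ₗ[F] V, (∀ u v : V, Φ (g u) (g v) = Φ u v) ∧
      LinearMap.det (g : V →ₗ[F] V) = 1 ∧
      ∀ a, (W a).map (g : V →ₗ[F] V) = W' a := by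
  classical
  obtain ⟨p, k, hp, hk, hqpk⟩ := hq
  haveI hpfact : Fact p.Prime := ⟨hp⟩
  -- characteristic
  obtain ⟨p', hp'⟩ := CharP.exists F
  haveI := hp'
  obtain ⟨m, hpp', hcard'⟩ := FiniteField.card F p'
  have hpp : p' = p := by
    have h1 : p' ∣ p ^ (2 * k) := by
      have : p' ^ (m : ℕ) = p ^ (2 * k) := by
        rw [← hcard', hcard, hqpk, ← pow_mul, mul_comm k 2]
      rw [← this]
      exact dvd_pow_self p' (by exact_mod_cast m.ne_zero)
    exact (Nat.prime_dvd_prime_iff_eq hpp' hp).mp (hpp'.dvd_of_dvd_pow h1)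
  haveI : CharP F p := hpp ▸ hp'
  -- the Frobenius-power ring hom
  have hq0 : q ≠ 0 := by omega
  let σ : F →+* F :=
    { toFun := fun x => x ^ q
      map_zero' := zero_pow hq0
      map_one' := one_pow q
      map_mul' := fun x y => mul_pow x y q
      map_add' := by
        intro x y
        simp only [hqpk]
        exact add_pow_char_pow x y p k }
  have hsig2 : ∀ x : F, (x ^ q) ^ q = x := by
    intro x
    rw [← pow_mul, ← sq, ← hcard, FiniteField.pow_card]
  have h : HermData q Φ :=
    ⟨hadd₁, hadd₂, hsmul₁, hsmul₂, hherm, hq0, hsig2,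
      ff_norm_surj hq2 hcard, ff_exists_mu hq2 hcard⟩
  have hnd' : ∀ x : V, (∀ y : V, Φ y x = 0) → x = 0 := by
    intro x hx
    refine hnd x fun w => ?_
    rw [hherm w x, hx w, zero_pow hq0]
  -- adapted orthonormal bases
  obtain ⟨w, hwON, hwspan, -, hwad⟩ :=
    flag_extend h hnd' r W hWmono hWnd 0 Fin.elim0 (fun i => i.elim0) (fun i => i.elim0)
  obtain ⟨w', hw'ON, hw'span, -, hw'ad⟩ :=
    flag_extend h hnd' r W' hW'mono hW'nd 0 Fin.elim0 (fun i => i.elim0) (fun i => i.elim0)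
  have hN0 : 0 < Module.finrank F V := by rw [hdim]; omega
  let bw : Basis (Fin (Module.finrank F V)) F V := Basis.mk (hwON.li h) (le_of_eq hwspan.symm)
  let bw' : Basis (Fin (Module.finrank F V)) F V := Basis.mk (hw'ON.li h) (le_of_eq hw'span.symm)
  have hbw : ∀ i, bw i = w i := fun i => Basis.mk_apply _ _ i
  have hbw' : ∀ i, bw' i = w' i := fun i => Basis.mk_apply _ _ i
  -- first isometry
  let g₀ : V ≃ₗ[F] V := bw.equiv bw' (Equiv.refl _)
  have hg₀ : ∀ i, g₀ (w i) = w' i := by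
    intro i
    rw [← hbw i, ← hbw' i]
    exact bw.equiv_apply i bw' (Equiv.refl _)
  have hIso₀ : ∀ x y, Φ (g₀ x) (g₀ y) = Φ x y :=
    isom h hwON hw'ON bw hbw g₀ hg₀
  have hmap₀ : ∀ a, (W a).map (g₀ : V →ₗ[F] V) = W' a := by
    intro a
    conv_lhs => rw [hwad a]
    rw [Submodule.map_span, Set.image_image]
    have hfun : (fun j : Fin (Module.finrank F V) => (g₀ : V →ₗ[F] V) (w j)) = fun j => w' j :=
      funext fun j => hg₀ j
    rw [hfun, hdims a]
    exact (hw'ad a).symm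
  -- determinant of g₀
  set A := LinearMap.toMatrix bw bw (g₀ : V →ₗ[F] V) with hA
  have hAkj : ∀ kk j, A kk j = bw.repr (g₀ (w j)) kk := by
    intro kk j
    rw [hA, LinearMap.toMatrix_apply, hbw]
    rfl
  have hcol : ∀ j, g₀ (w j) = ∑ kk, A kk j • w kk := by
    intro j
    calc g₀ (w j) = ∑ kk, bw.repr (g₀ (w j)) kk • bw kk := (bw.sum_repr _).symm
      _ = ∑ kk, A kk j • w kk := by
          refine Finset.sum_congr rfl fun kk _ => ?_
          rw [hAkj, hbw]
  have hGram : A.transpose * A.map σ = 1 := by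
    ext i j
    rw [Matrix.mul_apply, Matrix.one_apply]
    have h1 : Φ (g₀ (w i)) (g₀ (w j)) = ∑ kk, A kk i * (A kk j) ^ q := by
      rw [hcol i, hcol j, hwON.expand h]
    have h2 : Φ (g₀ (w i)) (g₀ (w j)) = if i = j then 1 else 0 := by
      rw [hg₀ i, hg₀ j, hw'ON i j]
    rw [← h2, h1]
    refine Finset.sum_congr rfl fun kk _ => ?_
    rw [Matrix.transpose_apply, Matrix.map_apply]
    rfl
  have hdet1 : LinearMap.det (g₀ : V →ₗ[F] V) *
      (LinearMap.det (g₀ : V →ₗ[F] V)) ^ q = 1 := by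
    have hd := congrArg Matrix.det hGram
    rw [Matrix.det_mul, Matrix.det_transpose, Matrix.det_one] at hd
    have hmapdet : (A.map σ).det = (A.det) ^ q := by
      have := RingHom.map_det σ A
      rw [RingHom.mapMatrix_apply] at this
      exact this.symm
    rw [hmapdet] at hd
    rw [← LinearMap.det_toMatrix bw]
    exact hd
  set δ := LinearMap.det (g₀ : V →ₗ[F] V) with hδ
  -- the correcting diagonal isometry
  set lam := δ ^ q with hlam
  have hδlam : δ * lam = 1 := hdet1
  have hpq1 : δ ^ (q + 1) = 1 := by
    rw [pow_succ, mul_comm]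
    exact hδlam
  have hlam1 : lam ^ (q + 1) = 1 := by
    rw [hlam, ← pow_mul, mul_comm q (q + 1), pow_mul, hpq1, one_pow]
  have hlam0 : lam ≠ 0 := by
    intro hc
    rw [hc, mul_zero] at hδlam
    exact zero_ne_one hδlam
  let i₀ : Fin (Module.finrank F V) := ⟨0, hN0⟩
  let c : Fin (Module.finrank F V) → F := fun i => if i = i₀ then lam else 1
  have hc0 : ∀ i, c i ≠ 0 := by
    intro i
    by_cases hi : i = i₀ <;> simp [c, hi, hlam0]
  have hcc : ∀ i, c i * (c i) ^ q = 1 := by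
    intro i
    by_cases hi : i = i₀
    · simp only [c, if_pos hi]
      rw [← pow_succ']
      exact hlam1
    · simp [c, hi]
  let w'' : Fin (Module.finrank F V) → V := fun i => c i • w' i
  have hw''ON : ON Φ w'' := by
    intro i j
    show Φ (c i • w' i) (c j • w' j) = _
    rw [h.smul₁, h.smul₂, hw'ON i j]
    by_cases hij : i = j
    · subst hij
      rw [← mul_assoc]
      simpa using hcc i
    · simp [hij]
  have hw''span : Submodule.span F (Set.range w'') = ⊤ := by
    have : Set.range w'' = (fun i => c i • w' i) '' Set.univ := by
      rw [Set.image_univ]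
    rw [this, span_smul_image c w' hc0, Set.image_univ, hw'span]
  let bw'' : Basis (Fin (Module.finrank F V)) F V := Basis.mk (hw''ON.li h) (le_of_eq hw''span.symm)
  have hbw'' : ∀ i, bw'' i = w'' i := fun i => Basis.mk_apply _ _ i
  let gh : V ≃ₗ[F] V := bw'.equiv bw'' (Equiv.refl _)
  have hgh : ∀ i, gh (w' i) = w'' i := by
    intro i
    rw [← hbw' i, ← hbw'' i]
    exact bw'.equiv_apply i bw'' (Equiv.refl _)
  have hIsoh : ∀ x y, Φ (gh x) (gh y) = Φ x y :=
    isom h hw'ON hw''ON bw' hbw' gh hgh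
  have hdeth : LinearMap.det (gh : V →ₗ[F] V) = lam := by
    have hmat : LinearMap.toMatrix bw' bw' (gh : V →ₗ[F] V) = Matrix.diagonal c := by
      ext i j
      rw [LinearMap.toMatrix_apply, hbw']
      have : (gh : V →ₗ[F] V) (w' j) = c j • w' j := hgh j
      rw [this, map_smul, ← hbw' j]
      rw [Finsupp.smul_apply, Basis.repr_self_apply, smul_eq_mul]
      rw [Matrix.diagonal_apply]
      by_cases hij : i = j
      · subst hij; simp
      · simp [hij, Ne.symm hij]
    rw [← LinearMap.det_toMatrix bw', hmat, Matrix.det_diagonal]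
    rw [Finset.prod_eq_single i₀ (fun b _ hb => by simp [c, hb]) (by simp)]
    simp [c]
  have hmaph : ∀ a, (W' a).map (gh : V →ₗ[F] V) = W' a := by
    intro a
    conv_lhs => rw [hw'ad a]
    rw [Submodule.map_span, Set.image_image]
    have hfun : (fun j : Fin (Module.finrank F V) => (gh : V →ₗ[F] V) (w' j)) = fun j => c j • w' j :=
      funext fun j => hgh j
    rw [hfun, span_smul_image c w' hc0]
    exact (hw'ad a).symm
  -- the final isometry
  refine ⟨g₀.trans gh, ?_, ?_, ?_⟩
  · intro x y
    simp only [LinearEquiv.trans_apply]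
    rw [hIsoh, hIso₀]
  · rw [LinearEquiv.coe_trans, LinearMap.det_comp, hdeth, ← hδ, mul_comm]
    exact hδlam
  · intro a
    rw [LinearEquiv.coe_trans, Submodule.map_comp, hmap₀ a, hmaph a]
end
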